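/- arXiv:2504.00251 — 2 statements merged into one kernel-verified Lean document; each statement's English description precedes it below -/
import Mathlib

section
/- Let Y be a real random variable and (A,B) a random vector in ℝ² such that Y satisfies the distributional equation Y =_d AY + B. Suppose there exist points h = (a,b) and h' = (a',b') in the semigroup G(supp 𝓛(A,B)) generated by the support of the law of (A,B) such that 0 < a < 1, a' > 1, and x₀(h') := b'/(1−a') < x₀(h) := b/(1−a). Then the half-line [x₀(h), ∞) is contained in the support of the law of Y. -/
open MeasureTheory ProbabilityTheory Filter

/-- Multiplication in the affine semigroup `Aff(ℝ)`, identifying the point `(a, b) ∈ ℝ²`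
with the affine map `x ↦ a * x + b`; composition corresponds to
`(a₁, b₁)(a₂, b₂) = (a₁ * a₂, b₁ + a₁ * b₂)`. -/
def affMul (h₁ h₂ : ℝ × ℝ) : ℝ × ℝ := (h₁.1 * h₂.1, h₁.2 + h₁.1 * h₂.2)

/-- The semigroup `G(Γ)` generated by a set `Γ ⊆ ℝ²` under affine multiplication:
all products `h₁ h₂ ⋯ hₙ` with `hᵢ ∈ Γ`. -/
inductive affGen (Γ : Set (ℝ × ℝ)) : ℝ × ℝ → Prop
  | base {h : ℝ × ℝ} (hh : h ∈ Γ) : affGen Γ h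
  | mul {h₁ h₂ : ℝ × ℝ} (H₁ : affGen Γ h₁) (H₂ : affGen Γ h₂) : affGen Γ (affMul h₁ h₂)

/-- The topological support of a measure: the set of points all of whose open
neighborhoods have positive measure (equivalently, the smallest closed set of full
measure, for a Borel measure on ℝ or ℝ²). -/
def measureSupport {X : Type*} [TopologicalSpace X] [MeasurableSpace X]
    (μ : Measure X) : Set X := {x | ∀ U ∈ nhds x, 0 < μ U}

/-- Powers of an element of the semigroup: if `(a, (1-a)*c)` (affine map with fixed
point `c`) belongs to `affGen Γ`, so do all its powers `(a^i, (1-a^i)*c)`, `i ≥ 1`. -/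
private lemma affGen_pow {Γ : Set (ℝ × ℝ)} {a c : ℝ} (h : affGen Γ (a, (1 - a) * c)) :
    ∀ i : ℕ, affGen Γ (a ^ (i + 1), (1 - a ^ (i + 1)) * c) := by
  intro i
  induction i with
  | zero => simpa using h
  | succ n ih =>
    have hmul := affGen.mul h ih
    have he : affMul (a, (1 - a) * c) (a ^ (n + 1), (1 - a ^ (n + 1)) * c)
        = (a ^ (n + 1 + 1), (1 - a ^ (n + 1 + 1)) * c) := by
      simp only [affMul, Prod.mk.injEq]
      constructor <;> ring
    rwa [he] at hmul

/-- The support of a probability measure on a second countable space is nonempty. -/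
private lemma measureSupport_nonempty {X : Type*} [TopologicalSpace X] [MeasurableSpace X]
    [SecondCountableTopology X]
    (μ : Measure X) [IsProbabilityMeasure μ] : (measureSupport μ).Nonempty := by
  by_contra h
  rw [Set.not_nonempty_iff_eq_empty] at h
  have hf : ∀ x : X, ∃ U, U ∈ nhds x ∧ μ U = 0 := by
    intro x
    have hx : x ∉ measureSupport μ := by rw [h]; exact Set.notMem_empty x
    simp only [measureSupport, Set.mem_setOf_eq, not_forall] at hx
    obtain ⟨U, hU, hU0⟩ := hx
    exact ⟨U, hU, nonpos_iff_eq_zero.mp (not_lt.mp hU0)⟩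
  choose f hf1 hf2 using hf
  obtain ⟨s, hsc, hsU⟩ := TopologicalSpace.countable_cover_nhds hf1
  have h0 : μ Set.univ = 0 := by
    rw [← hsU]
    exact (measure_biUnion_null_iff hsc).mpr fun x _ => hf2 x
  rw [measure_univ] at h0
  exact one_ne_zero h0

/-- One-step invariance of the support of the law of `Y` under points in the support
of the law of `(A, B)`. -/
private lemma mem_measureSupport_affine
    {Ω : Type*} [MeasurableSpace Ω] (P : Measure Ω)
    (Y A B : Ω → ℝ) (hY : Measurable Y) (hA : Measurable A) (hB : Measurable B)
    (hIndep : IndepFun Y (fun ω => (A ω, B ω)) P)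
    (hDist : P.map (fun ω => A ω * Y ω + B ω) = P.map Y)
    {α β y : ℝ} (hαβ : (α, β) ∈ measureSupport (P.map (fun ω => (A ω, B ω))))
    (hy : y ∈ measureSupport (P.map Y)) :
    α * y + β ∈ measureSupport (P.map Y) := by
  intro U hU
  obtain ⟨V, hVU, hVopen, hxV⟩ := mem_nhds_iff.mp hU
  have hmeas : Measurable (fun ω => A ω * Y ω + B ω) := (hA.mul hY).add hB
  have hABmeas : Measurable (fun ω => (A ω, B ω)) := hA.prodMk hB
  have hψ : Continuous (fun p : ℝ × (ℝ × ℝ) => p.2.1 * p.1 + p.2.2) :=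
    (continuous_snd.fst.mul continuous_fst).add continuous_snd.snd
  have hVpre : (fun p : ℝ × (ℝ × ℝ) => p.2.1 * p.1 + p.2.2) ⁻¹' V ∈ nhds (y, (α, β)) :=
    (hVopen.preimage hψ).mem_nhds hxV
  rw [mem_nhds_prod_iff] at hVpre
  obtain ⟨u, hu, v, hv, huv⟩ := hVpre
  obtain ⟨u', hu'sub, hu'open, hyu'⟩ := mem_nhds_iff.mp hu
  obtain ⟨v', hv'sub, hv'open, hαβv'⟩ := mem_nhds_iff.mp hv
  have hsub : Y ⁻¹' u' ∩ (fun ω => (A ω, B ω)) ⁻¹' v'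
      ⊆ (fun ω => A ω * Y ω + B ω) ⁻¹' V := by
    rintro ω ⟨h1, h2⟩
    exact huv (Set.mk_mem_prod (hu'sub h1) (hv'sub h2))
  have hkey : P (Y ⁻¹' u') * P ((fun ω => (A ω, B ω)) ⁻¹' v')
      ≤ P ((fun ω => A ω * Y ω + B ω) ⁻¹' V) := by
    rw [← hIndep.measure_inter_preimage_eq_mul _ _ hu'open.measurableSet
      hv'open.measurableSet]
    exact measure_mono hsub
  have h1 : 0 < P (Y ⁻¹' u') := by
    have := hy u' (hu'open.mem_nhds hyu')
    rwa [Measure.map_apply hY hu'open.measurableSet] at this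
  have h2 : 0 < P ((fun ω => (A ω, B ω)) ⁻¹' v') := by
    have := hαβ v' (hv'open.mem_nhds hαβv')
    rwa [Measure.map_apply hABmeas hv'open.measurableSet] at this
  have hpos : 0 < P.map Y V := by
    rw [← hDist, Measure.map_apply hmeas hVopen.measurableSet]
    exact lt_of_lt_of_le (ENNReal.mul_pos h1.ne' h2.ne') hkey
  exact lt_of_lt_of_le hpos (measure_mono hVU)

set_option maxHeartbeats 2000000 in
/-- **Proposition 2.5.4 of Buraczewski–Damek–Mikosch.** If `Y =_d A Y + B` and the
semigroup generated by the support of `𝓛(A,B)` contains points `h = (a,b)` with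
`0 < a < 1` and `h' = (a',b')` with `a' > 1` whose fixed points satisfy
`x₀(h') < x₀(h)`, then `[x₀(h), ∞) ⊆ supp 𝓛(Y)`. -/
theorem support_of_solution_contains_halfline
    {Ω : Type*} [MeasurableSpace Ω] (P : Measure Ω) [IsProbabilityMeasure P]
    (Y A B : Ω → ℝ) (hY : Measurable Y) (hA : Measurable A) (hB : Measurable B)
    (hIndep : IndepFun Y (fun ω => (A ω, B ω)) P)
    (hDist : P.map (fun ω => A ω * Y ω + B ω) = P.map Y)
    (a b a' b' : ℝ)
    (hh : affGen (measureSupport (P.map (fun ω => (A ω, B ω)))) (a, b))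
    (hh' : affGen (measureSupport (P.map (fun ω => (A ω, B ω)))) (a', b'))
    (ha0 : 0 < a) (ha1 : a < 1) (ha' : 1 < a')
    (hfix : b' / (1 - a') < b / (1 - a)) :
    Set.Ici (b / (1 - a)) ⊆ measureSupport (P.map Y) := by
  classical
  intro x hx
  set Γ := measureSupport (P.map (fun ω => (A ω, B ω))) with hΓ
  set ν := P.map Y with hν
  haveI : IsProbabilityMeasure ν := Measure.isProbabilityMeasure_map hY.aemeasurable
  set x₁ := b / (1 - a) with hx₁
  set x₂ := b' / (1 - a') with hx₂
  have hx' : x₁ ≤ x := hx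
  have h1a : (0:ℝ) < 1 - a := by linarith
  have h1a' : (1:ℝ) - a' ≠ 0 := by
    have : (1:ℝ) - a' < 0 := by linarith
    exact this.ne
  have hbx : (1 - a) * x₁ = b := by
    rw [hx₁, mul_comm]
    exact div_mul_cancel₀ b h1a.ne'
  have hbx' : (1 - a') * x₂ = b' := by
    rw [hx₂, mul_comm]
    exact div_mul_cancel₀ b' h1a'
  clear_value x₁ x₂
  have hfa : a * x₁ + b = x₁ := by linear_combination -hbx
  have hδ : 0 < x₁ - x₂ := by linarith
  -- powers of h and h' belong to the semigroup
  have hF : ∀ i : ℕ, affGen Γ (a ^ (i + 1), (1 - a ^ (i + 1)) * x₁) := by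
    apply affGen_pow
    rwa [hbx]
  have hG : ∀ j : ℕ, affGen Γ (a' ^ (j + 1), (1 - a' ^ (j + 1)) * x₂) := by
    apply affGen_pow
    rwa [hbx']
  -- invariance of the support under the semigroup
  have inv : ∀ p : ℝ × ℝ, affGen Γ p → ∀ y : ℝ,
      y ∈ measureSupport ν → p.1 * y + p.2 ∈ measureSupport ν := by
    intro p hp
    induction hp with
    | base hmem =>
      intro y hy
      exact mem_measureSupport_affine P Y A B hY hA hB hIndep hDist hmem hy
    | @mul p₁ p₂ H1 H2 ih1 ih2 =>
      intro y hy
      have hstep := ih1 (p₂.1 * y + p₂.2) (ih2 y hy)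
      have he : (affMul p₁ p₂).1 * y + (affMul p₁ p₂).2
          = p₁.1 * (p₂.1 * y + p₂.2) + p₁.2 := by
        simp only [affMul]; ring
      rwa [he]
  -- greedy one-step improvement towards the target x
  have step : ∀ p : ℝ × ℝ, affGen Γ p → 0 < p.1 → p.1 * x₁ + p.2 ≤ x →
      ∃ q : ℝ × ℝ, affGen Γ q ∧ 0 < q.1 ∧ q.1 * x₁ + q.2 ≤ x ∧
        x - (q.1 * x₁ + q.2) ≤ (1 - a) * (x - (p.1 * x₁ + p.2)) := by
    intro p hp hσ hval
    set r := x - (p.1 * x₁ + p.2) with hr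
    have hr0 : 0 ≤ r := by linarith
    rcases eq_or_lt_of_le hr0 with hre | hrpos
    · -- remainder zero: pad with h
      refine ⟨affMul p (a, b), affGen.mul hp hh, ?_, ?_, ?_⟩
      · simpa [affMul] using mul_pos hσ ha0
      · have he : (affMul p (a, b)).1 * x₁ + (affMul p (a, b)).2 = p.1 * x₁ + p.2 := by
          simp only [affMul]; linear_combination p.1 * hfa
        rw [he]; exact hval
      · have he : (affMul p (a, b)).1 * x₁ + (affMul p (a, b)).2 = p.1 * x₁ + p.2 := by
          simp only [affMul]; linear_combination p.1 * hfa
        have h0 : x - (p.1 * x₁ + p.2) = 0 := by rw [← hr, ← hre]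
        rw [he, h0, ← hre]
        simp
    · -- remainder positive
      have hσδ : 0 < p.1 * (x₁ - x₂) := mul_pos hσ hδ
      obtain ⟨j, hj⟩ := pow_unbounded_of_one_lt (1 + r / (p.1 * (x₁ - x₂))) ha'
      have hjr : r < p.1 * (x₁ - x₂) * (a' ^ j - 1) := by
        have h' : r / (p.1 * (x₁ - x₂)) < a' ^ j - 1 := by linarith
        have hcancel : r / (p.1 * (x₁ - x₂)) * (p.1 * (x₁ - x₂)) = r :=
          div_mul_cancel₀ r hσδ.ne'
        nlinarith [h', hσδ, hcancel]
      obtain ⟨j', rfl⟩ : ∃ j'', j = j'' + 1 := by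
        cases j with
        | zero =>
          exfalso
          rw [pow_zero] at hj
          have : 0 < r / (p.1 * (x₁ - x₂)) := div_pos hrpos hσδ
          linarith
        | succ n => exact ⟨n, rfl⟩
      set D := (x₁ - x₂) * (a' ^ (j' + 1) - 1) with hD_def
      have hAgt1 : (1:ℝ) < a' ^ (j' + 1) := one_lt_pow₀ ha' (Nat.succ_ne_zero j')
      have hD : 0 < D := mul_pos hδ (by linarith)
      have hex : ∃ i : ℕ, p.1 * a ^ i * D ≤ r := by
        obtain ⟨i, hi⟩ := exists_pow_lt_of_lt_one (div_pos hrpos (mul_pos hσ hD)) ha1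
        refine ⟨i, ?_⟩
        have := (lt_div_iff₀ (mul_pos hσ hD)).mp hi
        nlinarith [this]
      set i := Nat.find hex with hi_def
      have hfind : p.1 * a ^ i * D ≤ r := Nat.find_spec hex
      have hi1 : i ≠ 0 := by
        intro h0
        have h00 : p.1 * a ^ 0 * D ≤ r := by rw [← h0]; exact hfind
        rw [pow_zero] at h00
        nlinarith [hjr]
      obtain ⟨i', hii'⟩ : ∃ i'', i = i'' + 1 := ⟨i - 1, by omega⟩
      have hmin : ¬ p.1 * a ^ i' * D ≤ r := Nat.find_min hex (by omega)
      push_neg at hmin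
      have hinc_lb : a * r < p.1 * a ^ (i' + 1) * D := by
        have h1 := mul_lt_mul_of_pos_left hmin ha0
        have heq : a * (p.1 * a ^ i' * D) = p.1 * a ^ (i' + 1) * D := by ring
        linarith
      have hinc_ub : p.1 * a ^ (i' + 1) * D ≤ r := by rw [← hii']; exact hfind
      refine ⟨affMul p (affMul (a ^ (i' + 1), (1 - a ^ (i' + 1)) * x₁)
          (a' ^ (j' + 1), (1 - a' ^ (j' + 1)) * x₂)),
        affGen.mul hp (affGen.mul (hF i') (hG j')), ?_, ?_, ?_⟩
      · simp only [affMul]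
        positivity
      · have hvq : (affMul p (affMul (a ^ (i' + 1), (1 - a ^ (i' + 1)) * x₁)
            (a' ^ (j' + 1), (1 - a' ^ (j' + 1)) * x₂))).1 * x₁
            + (affMul p (affMul (a ^ (i' + 1), (1 - a ^ (i' + 1)) * x₁)
            (a' ^ (j' + 1), (1 - a' ^ (j' + 1)) * x₂))).2
            = (p.1 * x₁ + p.2) + p.1 * a ^ (i' + 1) * D := by
          simp only [affMul, hD_def]; ring
        rw [hvq]; linarith
      · have hvq : (affMul p (affMul (a ^ (i' + 1), (1 - a ^ (i' + 1)) * x₁)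
            (a' ^ (j' + 1), (1 - a' ^ (j' + 1)) * x₂))).1 * x₁
            + (affMul p (affMul (a ^ (i' + 1), (1 - a ^ (i' + 1)) * x₁)
            (a' ^ (j' + 1), (1 - a' ^ (j' + 1)) * x₂))).2
            = (p.1 * x₁ + p.2) + p.1 * a ^ (i' + 1) * D := by
          simp only [affMul, hD_def]; ring
        rw [hvq]; linarith
  -- iterate the greedy step
  have iter : ∀ n : ℕ, ∃ q : ℝ × ℝ, affGen Γ q ∧ 0 < q.1 ∧ q.1 * x₁ + q.2 ≤ x ∧
      x - (q.1 * x₁ + q.2) ≤ (1 - a) ^ n * (x - x₁) := by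
    intro n
    induction n with
    | zero =>
      refine ⟨(a, b), hh, ha0, ?_, ?_⟩
      · simp only; linarith [hfa]
      · simp only [pow_zero, one_mul]; linarith [hfa]
    | succ n ih =>
      obtain ⟨q, hq, hq1, hq2, hq3⟩ := ih
      obtain ⟨q', hq', h1, h2, h3⟩ := step q hq hq1 hq2
      refine ⟨q', hq', h1, h2, ?_⟩
      calc x - (q'.1 * x₁ + q'.2) ≤ (1 - a) * (x - (q.1 * x₁ + q.2)) := h3
        _ ≤ (1 - a) * ((1 - a) ^ n * (x - x₁)) := by
            exact mul_le_mul_of_nonneg_left hq3 h1a.le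
        _ = (1 - a) ^ (n + 1) * (x - x₁) := by ring
  -- conclusion
  intro U hU
  obtain ⟨ε, hε, hball⟩ := Metric.mem_nhds_iff.mp hU
  obtain ⟨y₀, hy₀⟩ := measureSupport_nonempty ν
  obtain ⟨n, hn⟩ := exists_pow_lt_of_lt_one
    (show (0:ℝ) < ε / 2 / (x - x₁ + 1) from div_pos (by linarith) (by linarith)) (show (1:ℝ) - a < 1 by linarith)
  obtain ⟨q, hqΓ, hq1, hq2, hq3⟩ := iter n
  have hgap : x - (q.1 * x₁ + q.2) < ε / 2 := by
    have hpow0 : 0 ≤ (1 - a) ^ n := pow_nonneg h1a.le n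
    have hA1 : (1 - a) ^ n * (x - x₁) ≤ (1 - a) ^ n * (x - x₁ + 1) := by nlinarith
    have hA2 : (1 - a) ^ n * (x - x₁ + 1) < ε / 2 := by
      have hpos : (0:ℝ) < x - x₁ + 1 := by linarith
      have := (lt_div_iff₀ hpos).mp hn
      linarith
    linarith
  set T := |y₀ - x₁| with hT
  have hT0 : 0 ≤ T := abs_nonneg _
  obtain ⟨k, hk⟩ := exists_pow_lt_of_lt_one
    (show (0:ℝ) < ε / 2 / (q.1 * (T + 1)) by positivity) ha1
  have hkk : q.1 * a ^ (k + 1) * T < ε / 2 := by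
    have hTpos : (0:ℝ) < q.1 * (T + 1) := by positivity
    have hk' := (lt_div_iff₀ hTpos).mp hk
    have hpk : a ^ (k + 1) ≤ a ^ k := by
      have : a ^ (k + 1) = a * a ^ k := by ring
      nlinarith [pow_nonneg ha0.le k]
    have s1 : q.1 * a ^ (k + 1) * T ≤ q.1 * a ^ k * T :=
      mul_le_mul_of_nonneg_right (mul_le_mul_of_nonneg_left hpk hq1.le) hT0
    have s2 : q.1 * a ^ k * T ≤ a ^ k * (q.1 * (T + 1)) := by
      nlinarith [mul_nonneg hq1.le (pow_nonneg ha0.le k)]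
    linarith
  set q' := affMul q (a ^ (k + 1), (1 - a ^ (k + 1)) * x₁) with hq'def
  have hq'Γ : affGen Γ q' := affGen.mul hqΓ (hF k)
  have hz : q'.1 * y₀ + q'.2 ∈ measureSupport ν := inv q' hq'Γ y₀ hy₀
  have hzx : |q'.1 * y₀ + q'.2 - x| < ε := by
    have e1 : q'.1 * y₀ + q'.2 - x
        = q.1 * a ^ (k + 1) * (y₀ - x₁) - (x - (q.1 * x₁ + q.2)) := by
      simp only [hq'def, affMul]; ring
    have hc : (0:ℝ) ≤ q.1 * a ^ (k + 1) := by positivity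
    have e2 : q.1 * a ^ (k + 1) * (y₀ - x₁) ≤ q.1 * a ^ (k + 1) * T :=
      mul_le_mul_of_nonneg_left (le_abs_self _) hc
    have e3 : -(q.1 * a ^ (k + 1) * T) ≤ q.1 * a ^ (k + 1) * (y₀ - x₁) := by
      have := mul_le_mul_of_nonneg_left (neg_abs_le (y₀ - x₁)) hc
      have heq : q.1 * a ^ (k + 1) * -|y₀ - x₁| = -(q.1 * a ^ (k + 1) * T) := by
        rw [hT]; ring
      linarith [this, heq.symm.le]
    rw [abs_lt]
    constructor <;> [linarith; linarith]
  have hzball : q'.1 * y₀ + q'.2 ∈ Metric.ball x ε := by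
    rw [Metric.mem_ball, Real.dist_eq]; exact hzx
  have hb : 0 < ν (Metric.ball x ε) := hz _ (Metric.isOpen_ball.mem_nhds hzball)
  exact lt_of_lt_of_le hb (measure_mono hball)
end

section
/- Let Y be a real random variable and (A,B) a random vector in ℝ² such that Y satisfies the distributional equation Y =_d AY + B. Suppose the law of (A,B) assigns strictly positive probability to each of the two sets {(x,y) ∈ ℝ² : x > 1, y > 0} and {(x,y) ∈ ℝ² : 0 < x < 1, y > 0}. Then the support of the law of Y is unbounded from above; in particular, P(Y > u) > 0 for every real u. -/
open MeasureTheory ProbabilityTheory Set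

/-!
If `(a, b)` lies in the support of the law of `(A, B)`, then by independence the support `S` of
the law of `Y` is mapped into itself by `y ↦ a y + b`. Were `S` bounded above, its supremum
would lie below the fixed point `-b / (a - 1) < 0` of an expanding such map (`a > 1`, `b > 0`)
and above the fixed point `b / (1 - a) > 0` of a contracting one (`0 < a < 1`, `b > 0`).
-/

lemma measureSupport_eq_support {X : Type*} [TopologicalSpace X] [MeasurableSpace X]
    (μ : Measure X) : measureSupport μ = μ.support :=
  Set.ext fun x => (Measure.mem_support_iff_forall x).symm

lemma measure_Ioi_pos_of_not_bddAbove_support {X : Type*} [TopologicalSpace X] [LinearOrder X]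
    [OrderTopology X] [MeasurableSpace X] {μ : Measure X} (h : ¬ BddAbove μ.support) (u : X) :
    0 < μ (Ioi u) := by
  obtain ⟨t, ht, hut⟩ := not_bddAbove_iff.mp h u
  exact (Measure.mem_support_iff_forall t).mp ht _ (Ioi_mem_nhds hut)

lemma measure_preimage_pos_of_mem_support_map {Ω β : Type*} [MeasurableSpace Ω]
    [TopologicalSpace β] [MeasurableSpace β] [OpensMeasurableSpace β] {P : Measure Ω}
    {X : Ω → β} (hX : Measurable X) {x : β} (hx : x ∈ (P.map X).support) {V : Set β}
    (hV : IsOpen V) (hxV : x ∈ V) : 0 < P (X ⁻¹' V) := by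
  rw [← Measure.map_apply hX hV.measurableSet]
  exact (Measure.mem_support_iff_forall x).mp hx V (hV.mem_nhds hxV)

lemma ProbabilityTheory.IndepFun.apply_mem_support_map {Ω α β γ : Type*} [MeasurableSpace Ω]
    [TopologicalSpace α] [MeasurableSpace α] [TopologicalSpace β] [MeasurableSpace β]
    [OpensMeasurableSpace β] [TopologicalSpace γ] [MeasurableSpace γ] [OpensMeasurableSpace γ]
    {P : Measure Ω} {X : Ω → β} {Z : Ω → γ} (hXZ : IndepFun X Z P) (hX : Measurable X)
    (hZ : Measurable Z) {g : β × γ → α} (hg : Continuous g) (hgm : Measurable g) {x : β} {z : γ}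
    (hx : x ∈ (P.map X).support) (hz : z ∈ (P.map Z).support) :
    g (x, z) ∈ (P.map fun ω => g (X ω, Z ω)).support := by
  refine (Measure.mem_support_iff_forall _).mpr fun U hU => ?_
  obtain ⟨V, W, hV, hxV, hW, hzW, hVW⟩ := mem_nhds_prod_iff'.mp (hg.continuousAt hU)
  calc 0 < P (X ⁻¹' V) * P (Z ⁻¹' W) :=
        ENNReal.mul_pos (measure_preimage_pos_of_mem_support_map hX hx hV hxV).ne'
          (measure_preimage_pos_of_mem_support_map hZ hz hW hzW).ne'
    _ = P (X ⁻¹' V ∩ Z ⁻¹' W) :=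
        (hXZ.measure_inter_preimage_eq_mul V W hV.measurableSet hW.measurableSet).symm
    _ ≤ P ((fun ω => g (X ω, Z ω)) ⁻¹' U) := measure_mono fun ω hω => hVW ⟨hω.1, hω.2⟩
    _ ≤ P.map (fun ω => g (X ω, Z ω)) U :=
        Measure.le_map_apply (hgm.comp (hX.prodMk hZ)).aemeasurable U

lemma mapsTo_mul_add_support_map {Ω : Type*} [MeasurableSpace Ω] {P : Measure Ω}
    {Y A B : Ω → ℝ} (hY : Measurable Y) (hA : Measurable A) (hB : Measurable B)
    (hIndep : IndepFun Y (fun ω => (A ω, B ω)) P)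
    (hDist : P.map (fun ω => A ω * Y ω + B ω) = P.map Y) {a b : ℝ}
    (hab : (a, b) ∈ (P.map fun ω => (A ω, B ω)).support) :
    MapsTo (fun y => a * y + b) (P.map Y).support (P.map Y).support := fun _ hy =>
  hDist ▸ hIndep.apply_mem_support_map hY (hA.prodMk hB) (g := fun q => q.2.1 * q.1 + q.2.2)
    (by fun_prop) (by fun_prop) hy hab

lemma mul_add_csSup_le {S : Set ℝ} (hne : S.Nonempty) (hbdd : BddAbove S) {a b : ℝ}
    (ha : 0 < a) (hS : MapsTo (fun x => a * x + b) S S) : a * sSup S + b ≤ sSup S := by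
  have : sSup S ≤ (sSup S - b) / a := csSup_le hne fun s hs =>
    (le_div_iff₀ ha).mpr (by linarith [le_csSup hbdd (hS hs)])
  linarith [(le_div_iff₀ ha).mp this]

lemma not_bddAbove_of_mapsTo_mul_add {S : Set ℝ} (hne : S.Nonempty) {a b a' b' : ℝ}
    (ha : 1 < a) (hb : 0 < b) (ha'₀ : 0 < a') (ha'₁ : a' < 1) (hb' : 0 < b')
    (h : MapsTo (fun x => a * x + b) S S) (h' : MapsTo (fun x => a' * x + b') S S) :
    ¬ BddAbove S := fun hbdd => by
  have := mul_add_csSup_le hne hbdd (by linarith) h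
  have := mul_add_csSup_le hne hbdd ha'₀ h'
  nlinarith

/-- If `Y =_d A Y + B` and the law of `(A, B)` charges both sets
`{x > 1, y > 0}` and `{0 < x < 1, y > 0}`, then the support of the law of `Y`
is unbounded from above; in particular `P(Y > u) > 0` for every real `u`. -/
theorem support_unbounded_above_of_charges
    {Ω : Type*} [MeasurableSpace Ω] (P : Measure Ω) [IsProbabilityMeasure P]
    (Y A B : Ω → ℝ) (hY : Measurable Y) (hA : Measurable A) (hB : Measurable B)
    (hIndep : IndepFun Y (fun ω => (A ω, B ω)) P)
    (hDist : P.map (fun ω => A ω * Y ω + B ω) = P.map Y)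
    (hpos₁ : 0 < P.map (fun ω => (A ω, B ω)) {p : ℝ × ℝ | 1 < p.1 ∧ 0 < p.2})
    (hpos₂ : 0 < P.map (fun ω => (A ω, B ω)) {p : ℝ × ℝ | 0 < p.1 ∧ p.1 < 1 ∧ 0 < p.2}) :
    ¬ BddAbove (measureSupport (P.map Y)) ∧ ∀ u : ℝ, 0 < P {ω | u < Y ω} := by
  obtain ⟨⟨a, b⟩, ⟨ha, hb⟩, hab⟩ := Measure.nonempty_inter_support_of_pos hpos₁
  obtain ⟨⟨a', b'⟩, ⟨ha'₀, ha'₁, hb'⟩, hab'⟩ := Measure.nonempty_inter_support_of_pos hpos₂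
  have hne : (P.map Y).support.Nonempty :=
    Measure.nonempty_support ((Measure.map_ne_zero_iff hY.aemeasurable).mpr
      (IsProbabilityMeasure.ne_zero P))
  have hunbdd : ¬ BddAbove (P.map Y).support :=
    not_bddAbove_of_mapsTo_mul_add hne ha hb ha'₀ ha'₁ hb'
      (mapsTo_mul_add_support_map hY hA hB hIndep hDist hab)
      (mapsTo_mul_add_support_map hY hA hB hIndep hDist hab')
  refine ⟨measureSupport_eq_support (P.map Y) ▸ hunbdd, fun u => ?_⟩
  have := measure_Ioi_pos_of_not_bddAbove_support hunbdd u
  rwa [Measure.map_apply hY measurableSet_Ioi] at this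
end
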